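/- Let G : ℝᵈ → Mat(d,d) be differentiable, symmetric positive-definite valued, and suppose the integrability condition ∂G_{km}/∂x_j = ∂G_{jm}/∂x_k holds for all j,k,m and all x. Then Ω(x) = Γ(x), where Ω_i(x) = |G|^{−1/2} Σ_j ∂_{x_j}[G⁻¹_{ij}|G|^{1/2}] and Γ_i(x) = (1/2) Σ_j ∂_{x_j} G⁻¹_{ij}(x). -/

import Mathlib

/-! By Jacobi's formula `∂ⱼ|G|^{1/2} = ½ |G|^{1/2} tr(G⁻¹ ∂ⱼG)`, so
`Ωᵢ = Σⱼ ∂ⱼG⁻¹ᵢⱼ + ½ Σⱼ G⁻¹ᵢⱼ tr(G⁻¹ ∂ⱼG)`. Differentiating `G⁻¹G = 1` gives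
`∂ⱼG⁻¹ = -G⁻¹ (∂ⱼG) G⁻¹`, and the integrability condition `∂ⱼGₖₘ = ∂ₖGⱼₘ` turns
`Σⱼ ∂ⱼG⁻¹ᵢⱼ = -Σⱼₖₘ G⁻¹ᵢₖ (∂ⱼGₖₘ) G⁻¹ₘⱼ` into `-Σₖ G⁻¹ᵢₖ tr(G⁻¹ ∂ₖG)`. Hence
`Ωᵢ = Σⱼ ∂ⱼG⁻¹ᵢⱼ - ½ Σⱼ ∂ⱼG⁻¹ᵢⱼ = Γᵢ`. -/

noncomputable def pd {d : ℕ} (f : (Fin d → ℝ) → ℝ) (x : Fin d → ℝ) (j : Fin d) : ℝ :=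
  fderiv ℝ f x (Pi.single j 1)

open Finset Filter Topology

section PartialDerivative

variable {d : ℕ} {f g : (Fin d → ℝ) → ℝ} {x : Fin d → ℝ}

lemma pd_congr_of_eventuallyEq (h : f =ᶠ[𝓝 x] g) (j : Fin d) : pd f x j = pd g x j := by
  rw [pd, pd, h.fderiv_eq]

lemma pd_const (c : ℝ) (j : Fin d) : pd (fun _ => c) x j = 0 := by
  simp [pd]

lemma pd_mul (hf : DifferentiableAt ℝ f x) (hg : DifferentiableAt ℝ g x) (j : Fin d) :
    pd (fun y => f y * g y) x j = pd f x j * g x + f x * pd g x j := by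
  simp only [pd, fderiv_fun_mul hf hg, add_apply, smul_apply, smul_eq_mul]
  ring

lemma pd_const_mul (hf : DifferentiableAt ℝ f x) (c : ℝ) (j : Fin d) :
    pd (fun y => c * f y) x j = c * pd f x j := by
  simp [pd, fderiv_const_mul hf]

lemma pd_sum {ι : Type*} (u : Finset ι) {f : ι → (Fin d → ℝ) → ℝ}
    (hf : ∀ i ∈ u, DifferentiableAt ℝ (f i) x) (j : Fin d) :
    pd (fun y => ∑ i ∈ u, f i y) x j = ∑ i ∈ u, pd (f i) x j := by
  simp [pd, fderiv_fun_sum hf]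

lemma pd_prod {ι : Type*} [DecidableEq ι] (u : Finset ι) {f : ι → (Fin d → ℝ) → ℝ}
    (hf : ∀ i ∈ u, DifferentiableAt ℝ (f i) x) (j : Fin d) :
    pd (fun y => ∏ i ∈ u, f i y) x j = ∑ i ∈ u, (∏ k ∈ u.erase i, f k x) * pd (f i) x j := by
  simp [pd, fderiv_finsetProd hf]

lemma pd_sqrt (hf : DifferentiableAt ℝ f x) (hx : f x ≠ 0) (j : Fin d) :
    pd (fun y => √(f y)) x j = pd f x j / (2 * √(f x)) := by
  have h : HasFDerivAt (fun y => √(f y)) ((1 / (2 * √(f x))) • fderiv ℝ f x) x :=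
    (Real.hasDerivAt_sqrt hx).comp_hasFDerivAt x hf.hasFDerivAt
  simp only [pd, h.fderiv, smul_apply, smul_eq_mul]
  ring

end PartialDerivative

section MatrixPartialDerivative

open Matrix

variable {d : ℕ} {x : Fin d → ℝ} {j : Fin d}

noncomputable def pdMatrix {m n : Type*} (A : (Fin d → ℝ) → Matrix m n ℝ) (x : Fin d → ℝ)
    (j : Fin d) : Matrix m n ℝ :=
  of fun a b => pd (fun y => A y a b) x j

lemma pdMatrix_mul {l m n : Type*} [Fintype m] {A : (Fin d → ℝ) → Matrix l m ℝ}
    {B : (Fin d → ℝ) → Matrix m n ℝ} (hA : ∀ a b, DifferentiableAt ℝ (fun y => A y a b) x)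
    (hB : ∀ a b, DifferentiableAt ℝ (fun y => B y a b) x) :
    pdMatrix (fun y => A y * B y) x j = pdMatrix A x j * B x + A x * pdMatrix B x j := by
  ext a b
  simp only [pdMatrix, of_apply, Matrix.mul_apply, Matrix.add_apply]
  rw [pd_sum (f := fun c y => A y a c * B y c b) _ fun c _ => (hA a c).mul (hB c b),
    ← sum_add_distrib]
  exact sum_congr rfl fun c _ => pd_mul (hA a c) (hB c b) j

variable {n : Type*} [Fintype n] [DecidableEq n] {A : (Fin d → ℝ) → Matrix n n ℝ}

lemma differentiableAt_det (hA : ∀ a b, DifferentiableAt ℝ (fun y => A y a b) x) :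
    DifferentiableAt ℝ (fun y => (A y).det) x := by
  simp_rw [det_apply']
  fun_prop

lemma differentiableAt_adjugate_apply (hA : ∀ a b, DifferentiableAt ℝ (fun y => A y a b) x)
    (a b : n) : DifferentiableAt ℝ (fun y => (A y).adjugate a b) x := by
  simp_rw [adjugate_apply]
  refine differentiableAt_det fun c e => ?_
  by_cases hc : c = b
  · simp [updateRow_apply, hc]
  · simpa [updateRow_apply, hc] using hA c e

lemma differentiableAt_inv_apply (hA : ∀ a b, DifferentiableAt ℝ (fun y => A y a b) x)
    (hx : (A x).det ≠ 0) (a b : n) : DifferentiableAt ℝ (fun y => (A y)⁻¹ a b) x := by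
  simp_rw [Matrix.inv_def, Matrix.smul_apply, Ring.inverse_eq_inv', smul_eq_mul]
  exact ((differentiableAt_det hA).inv hx).mul (differentiableAt_adjugate_apply hA a b)

lemma det_updateCol_eq_sum {R : Type*} [CommRing R] (M : Matrix n n R) (k : n) (v : n → R) :
    (M.updateCol k v).det =
      ∑ σ : Equiv.Perm n, Equiv.Perm.sign σ * (v (σ k) * ∏ i ∈ univ.erase k, M (σ i) i) := by
  rw [det_apply']
  refine sum_congr rfl fun σ _ => ?_
  rw [← mul_prod_erase _ _ (mem_univ k), updateCol_self,
    prod_congr rfl fun i hi => updateCol_ne (ne_of_mem_erase hi)]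

/-- **Jacobi's formula**. -/
theorem pd_det (hA : ∀ a b, DifferentiableAt ℝ (fun y => A y a b) x) (j : Fin d) :
    pd (fun y => (A y).det) x j = trace ((A x).adjugate * pdMatrix A x j) := by
  have hprod (σ : Equiv.Perm n) : DifferentiableAt ℝ (fun y => ∏ i, A y (σ i) i) x := by
    fun_prop
  have hcol (k : n) : ((A x).updateCol k fun a => pdMatrix A x j a k).det =
      ∑ a, (A x).adjugate k a * pdMatrix A x j a k := by
    rw [← cramer_apply, cramer_eq_adjugate_mulVec, mulVec, dotProduct]
  simp_rw [det_apply', pd_sum _ (fun σ _ => (hprod σ).const_mul _),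
    pd_const_mul (hprod _), pd_prod _ (fun i _ => hA _ i), trace, diag_apply, Matrix.mul_apply,
    ← hcol, det_updateCol_eq_sum, mul_sum]
  rw [sum_comm]
  refine sum_congr rfl fun k _ => sum_congr rfl fun σ _ => ?_
  simp only [pdMatrix, of_apply]
  ring

lemma pd_det_eq_det_mul_trace (hA : ∀ a b, DifferentiableAt ℝ (fun y => A y a b) x)
    (hx : (A x).det ≠ 0) (j : Fin d) :
    pd (fun y => (A y).det) x j = (A x).det * trace ((A x)⁻¹ * pdMatrix A x j) := by
  have hadj : (A x).adjugate = (A x).det • (A x)⁻¹ := by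
    rw [Matrix.inv_def, smul_smul, Ring.inverse_eq_inv', mul_inv_cancel₀ hx, one_smul]
  rw [pd_det hA, hadj, Matrix.smul_mul, trace_smul, smul_eq_mul]

theorem pdMatrix_inv (hA : ∀ a b, DifferentiableAt ℝ (fun y => A y a b) x)
    (hx : (A x).det ≠ 0) (j : Fin d) :
    pdMatrix (fun y => (A y)⁻¹) x j = -((A x)⁻¹ * pdMatrix A x j * (A x)⁻¹) := by
  have hinv_mul : ∀ᶠ y in 𝓝 x, (A y)⁻¹ * A y = 1 := by
    filter_upwards [(differentiableAt_det hA).continuousAt.eventually_ne hx] with y hy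
    exact nonsing_inv_mul _ (isUnit_iff_ne_zero.mpr hy)
  have hzero : pdMatrix (fun y => (A y)⁻¹ * A y) x j = 0 := by
    ext a b
    simp only [pdMatrix, of_apply]
    rw [pd_congr_of_eventuallyEq (g := fun _ => (1 : Matrix n n ℝ) a b)
      (hinv_mul.mono fun y hy => by rw [hy]), pd_const, Matrix.zero_apply]
  rw [pdMatrix_mul (differentiableAt_inv_apply hA hx) hA] at hzero
  calc pdMatrix (fun y => (A y)⁻¹) x j
      = pdMatrix (fun y => (A y)⁻¹) x j * A x * (A x)⁻¹ := by
        rw [Matrix.mul_assoc, mul_nonsing_inv _ (isUnit_iff_ne_zero.mpr hx), Matrix.mul_one]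
    _ = -((A x)⁻¹ * pdMatrix A x j * (A x)⁻¹) := by
        rw [eq_neg_of_add_eq_zero_left hzero, Matrix.neg_mul]

theorem pd_mul_sqrt_det {f : (Fin d → ℝ) → ℝ} (hf : DifferentiableAt ℝ f x)
    (hA : ∀ a b, DifferentiableAt ℝ (fun y => A y a b) x) (hx : 0 < (A x).det) (j : Fin d) :
    pd (fun y => f y * √(A y).det) x j =
      √(A x).det * (pd f x j + f x * trace ((A x)⁻¹ * pdMatrix A x j) / 2) := by
  rw [pd_mul hf ((differentiableAt_det hA).sqrt hx.ne'),
    pd_sqrt (differentiableAt_det hA) hx.ne', pd_det_eq_det_mul_trace hA hx.ne']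
  field_simp
  rw [Real.sq_sqrt hx.le]
  ring

end MatrixPartialDerivative

section IntegrableMetric

open Matrix

variable {d : ℕ} {G : (Fin d → ℝ) → Matrix (Fin d) (Fin d) ℝ} {x : Fin d → ℝ}

theorem sum_pd_inv_apply_eq_neg_sum_mul_trace
    (hG : ∀ a b, DifferentiableAt ℝ (fun y => G y a b) x) (hx : (G x).det ≠ 0)
    (hint : ∀ j k m, pd (fun y => G y k m) x j = pd (fun y => G y j m) x k) (i : Fin d) :
    ∑ j, pd (fun y => (G y)⁻¹ i j) x j =
      -∑ j, (G x)⁻¹ i j * trace ((G x)⁻¹ * pdMatrix G x j) := by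
  have hinv (j : Fin d) :
      pd (fun y => (G y)⁻¹ i j) x j = -((G x)⁻¹ * pdMatrix G x j * (G x)⁻¹) i j :=
    congr_fun₂ (pdMatrix_inv hG hx j) i j
  simp only [hinv, sum_neg_distrib, neg_inj, Matrix.mul_apply, trace, diag_apply,
    pdMatrix, of_apply, sum_mul, mul_sum]
  rw [sum_comm_cycle]
  refine sum_congr rfl fun e _ => ?_
  rw [sum_comm]
  refine sum_congr rfl fun c _ => sum_congr rfl fun a _ => ?_
  rw [hint a e c]
  ring

end IntegrableMetric

/-- Under the integrability condition `∂ⱼGₖₘ = ∂ₖGⱼₘ`, the terms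
`Ω` and `Γ` coincide. -/
theorem stmt7 {d : ℕ} (G : (Fin d → ℝ) → Matrix (Fin d) (Fin d) ℝ)
    (hGdiff : ∀ i j, Differentiable ℝ (fun x => G x i j))
    (hGpd : ∀ x, (G x).PosDef)
    (hint : ∀ (j k m : Fin d) (x : Fin d → ℝ),
      pd (fun y => G y k m) x j = pd (fun y => G y j m) x k) :
    ∀ (i : Fin d) (x : Fin d → ℝ),
      (Real.sqrt (G x).det)⁻¹ *
          ∑ j, pd (fun y => (G y)⁻¹ i j * Real.sqrt (G y).det) x j =
        (1 / 2) * ∑ j, pd (fun y => (G y)⁻¹ i j) x j := by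
  intro i x
  have hG : ∀ a b, DifferentiableAt ℝ (fun y => G y a b) x := fun a b => hGdiff a b x
  have hx : 0 < (G x).det := (hGpd x).det_pos
  rw [sum_congr rfl fun j _ => pd_mul_sqrt_det (differentiableAt_inv_apply hG hx.ne' i j) hG hx j,
    ← mul_sum, inv_mul_cancel_left₀ (Real.sqrt_pos.mpr hx).ne', sum_add_distrib, ← sum_div,
    sum_pd_inv_apply_eq_neg_sum_mul_trace hG hx.ne' (hint · · · x) i]
  ring
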